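/- Let H be a Hilbert space over 𝕜 (𝕜 = ℝ or ℂ), A a positive bounded linear operator on H, T an A-bounded operator on H, and x ∈ H with ‖x‖_A = 1. Then ‖Tx‖_A = m_A(T) (i.e., x ∈ m_T^A) if and only if ⟨Ty, Tx⟩_A = m_A(T)² · ⟨y, x⟩_A for all y ∈ H. -/

import Mathlib

open ContinuousLinearMap

variable {𝕜 H : Type*}

/-- The semi-norm induced by the positive operator `A`: `‖x‖_A = √(re ⟪A x, x⟫)`. -/
noncomputable def seminormA [RCLike 𝕜] [NormedAddCommGroup H] [InnerProductSpace 𝕜 H]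
    (A : H →L[𝕜] H) (x : H) : ℝ :=
  Real.sqrt (RCLike.re (inner 𝕜 (A x) x : 𝕜))

/-- The semi-inner product induced by `A`: `⟨x, y⟩_A = ⟪A x, y⟫`. -/
noncomputable def ipA [RCLike 𝕜] [NormedAddCommGroup H] [InnerProductSpace 𝕜 H]
    (A : H →L[𝕜] H) (x y : H) : 𝕜 :=
  inner 𝕜 (A x) y

/-- `T` is `A`-bounded. -/
def ABounded [RCLike 𝕜] [NormedAddCommGroup H] [InnerProductSpace 𝕜 H]
    (A T : H →L[𝕜] H) : Prop :=
  ∃ c : ℝ, 0 < c ∧ ∀ z : H, seminormA A (T z) ≤ c * seminormA A z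

/-- `T` preserves `A`-orthogonality at `x`. -/
def PreservesAOrthAt [RCLike 𝕜] [NormedAddCommGroup H] [InnerProductSpace 𝕜 H]
    (A T : H →L[𝕜] H) (x : H) : Prop :=
  ∀ y : H, ipA A x y = 0 → ipA A (T x) (T y) = 0

/-- `‖T‖_A`, the `A`-operator seminorm. -/
noncomputable def opNormA [RCLike 𝕜] [NormedAddCommGroup H] [InnerProductSpace 𝕜 H]
    (A T : H →L[𝕜] H) : ℝ :=
  sSup ((fun u => seminormA A (T u)) '' {u : H | seminormA A u = 1})

/-- `m_A(T)`, the minimum `A`-norm of `T`. -/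
noncomputable def minNormA [RCLike 𝕜] [NormedAddCommGroup H] [InnerProductSpace 𝕜 H]
    (A T : H →L[𝕜] H) : ℝ :=
  sInf ((fun u => seminormA A (T u)) '' {u : H | seminormA A u = 1})

section Aux

variable [RCLike 𝕜] [NormedAddCommGroup H] [InnerProductSpace 𝕜 H] [CompleteSpace H]
variable (A T : H →L[𝕜] H)

lemma seminormA_sq (hA : A.IsPositive) (z : H) :
    seminormA A z ^ 2 = RCLike.re (ipA A z z) :=
  Real.sq_sqrt (hA.2 z)

lemma seminormA_nonneg (z : H) : 0 ≤ seminormA A z := Real.sqrt_nonneg _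

lemma ipA_conj (hA : A.IsPositive) (u v : H) :
    ipA A u v = starRingEnd 𝕜 (ipA A v u) := by
  have h := hA.isSelfAdjoint.isSymmetric v u
  simp only [ContinuousLinearMap.coe_coe] at h
  rw [ipA, ipA, h, inner_conj_symm]

lemma seminormA_smul_real (r : ℝ) (z : H) :
    seminormA A ((r : 𝕜) • z) = |r| * seminormA A z := by
  simp only [seminormA, map_smul, inner_smul_left, inner_smul_right, RCLike.conj_ofReal,
    ← mul_assoc, ← RCLike.ofReal_mul, RCLike.re_ofReal_mul]
  rw [Real.sqrt_mul (mul_self_nonneg r), Real.sqrt_mul_self_eq_abs]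

lemma minNormA_nonneg : 0 ≤ minNormA A T :=
  Real.sInf_nonneg (by rintro r ⟨v, -, rfl⟩; exact seminormA_nonneg A _)

lemma minNormA_le {u : H} (hu : seminormA A u = 1) :
    minNormA A T ≤ seminormA A (T u) :=
  csInf_le ⟨0, by rintro r ⟨v, -, rfl⟩; exact seminormA_nonneg A _⟩ ⟨u, hu, rfl⟩

lemma minNormA_mul_le (hT : ABounded A T) (z : H) :
    minNormA A T * seminormA A z ≤ seminormA A (T z) := by
  rcases eq_or_lt_of_le (seminormA_nonneg A z) with h | h
  · rw [← h, mul_zero]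
    exact seminormA_nonneg A _
  · set r : ℝ := (seminormA A z)⁻¹ with hr
    have hr0 : 0 < r := inv_pos.2 h
    have hu : seminormA A ((r : 𝕜) • z) = 1 := by
      rw [seminormA_smul_real, abs_of_pos hr0, hr, inv_mul_cancel₀ h.ne']
    have h1 := minNormA_le A T hu
    rw [map_smul, seminormA_smul_real, abs_of_pos hr0] at h1
    calc minNormA A T * seminormA A z ≤ r * seminormA A (T z) * seminormA A z :=
          mul_le_mul_of_nonneg_right h1 (seminormA_nonneg A z)
      _ = seminormA A (T z) := by rw [hr, mul_comm _ (seminormA A (T z)), mul_assoc, inv_mul_cancel₀ h.ne', mul_one]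

/-- The quadratic form of the `A`-defect of `T` is nonnegative. -/
lemma defect_nonneg (hA : A.IsPositive) (hT : ABounded A T) (z : H) :
    (minNormA A T) ^ 2 * RCLike.re (ipA A z z) ≤ RCLike.re (ipA A (T z) (T z)) := by
  have h := minNormA_mul_le A T hT z
  have h2 : (minNormA A T * seminormA A z) ^ 2 ≤ seminormA A (T z) ^ 2 := by
    have hnn : 0 ≤ minNormA A T * seminormA A z :=
      mul_nonneg (minNormA_nonneg A T) (seminormA_nonneg A z)
    exact pow_le_pow_left₀ hnn h 2
  rw [mul_pow, seminormA_sq A hA, seminormA_sq A hA] at h2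
  exact h2

lemma ipA_expand (hA : A.IsPositive) (u v : H) (t : 𝕜) :
    RCLike.re (ipA A (u + t • v) (u + t • v)) =
      RCLike.re (ipA A u u) + 2 * RCLike.re (starRingEnd 𝕜 t * ipA A v u)
        + ‖t‖ ^ 2 * RCLike.re (ipA A v v) := by
  have hherm' : (inner 𝕜 (A u) v : 𝕜) = starRingEnd 𝕜 (inner 𝕜 (A v) u) := ipA_conj A hA u v
  have hct : starRingEnd 𝕜 t * t = ((‖t‖ ^ 2 : ℝ) : 𝕜) := by
    rw [RCLike.conj_mul, RCLike.ofReal_pow]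
  have hexp : ipA A (u + t • v) (u + t • v) =
      ipA A u u + t * starRingEnd 𝕜 (ipA A v u) + starRingEnd 𝕜 t * ipA A v u
        + ((‖t‖ ^ 2 : ℝ) : 𝕜) * ipA A v v := by
    simp only [ipA, map_add, map_smul, inner_add_left, inner_add_right, inner_smul_left,
      inner_smul_right]
    rw [hherm']
    linear_combination (inner 𝕜 (A v) v : 𝕜) * hct
  rw [hexp]
  simp only [map_add, RCLike.re_ofReal_mul]
  have hre : RCLike.re (t * starRingEnd 𝕜 (ipA A v u)) =
      RCLike.re (starRingEnd 𝕜 t * ipA A v u) := by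
    rw [← RCLike.conj_re (starRingEnd 𝕜 t * ipA A v u)]
    simp [mul_comm]
  rw [hre]
  ring

end Aux

theorem statement10 [RCLike 𝕜] [NormedAddCommGroup H] [InnerProductSpace 𝕜 H] [CompleteSpace H]
    (A T : H →L[𝕜] H) (hA : A.IsPositive) (hT : ABounded A T)
    (x : H) (hx : seminormA A x = 1) :
    seminormA A (T x) = minNormA A T ↔
      (∀ y : H, ipA A (T y) (T x) = (((minNormA A T) ^ 2 : ℝ) : 𝕜) * ipA A y x) := by
  set m := minNormA A T with hm
  have hm0 : 0 ≤ m := minNormA_nonneg A T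
  have hxx : RCLike.re (ipA A x x) = 1 := by
    rw [← seminormA_sq A hA, hx]; norm_num
  constructor
  · intro hTx y
    -- the defect value at x is zero
    have hTxx : RCLike.re (ipA A (T x) (T x)) = m ^ 2 := by
      rw [← seminormA_sq A hA, hTx]
    set c : 𝕜 := ipA A (T y) (T x) - ((m ^ 2 : ℝ) : 𝕜) * ipA A y x with hc
    suffices hc0 : c = 0 by
      have := hc0
      rw [hc, sub_eq_zero] at this
      exact this
    by_contra hne
    set D : ℝ := RCLike.re (ipA A (T y) (T y)) - m ^ 2 * RCLike.re (ipA A y y) with hD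
    have hD0 : 0 ≤ D := sub_nonneg.2 (defect_nonneg A T hA hT y)
    set s : ℝ := (D + 1)⁻¹ with hs
    have hs0 : 0 < s := inv_pos.2 (by linarith)
    set t : 𝕜 := -((s : 𝕜) * c) with ht
    -- evaluate the defect at x + t • y
    have hmain := defect_nonneg A T hA hT (x + t • y)
    have hTz : T (x + t • y) = T x + t • T y := by simp
    rw [hTz, ipA_expand A hA x y t, ipA_expand A hA (T x) (T y) t, hTxx, hxx] at hmain
    -- simplify the cross terms
    have hcross : RCLike.re (starRingEnd 𝕜 t * ipA A (T y) (T x))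
        - m ^ 2 * RCLike.re (starRingEnd 𝕜 t * ipA A y x) = -(s * ‖c‖ ^ 2) := by
      have h1 : starRingEnd 𝕜 t * ipA A (T y) (T x)
          - ((m ^ 2 : ℝ) : 𝕜) * (starRingEnd 𝕜 t * ipA A y x) = starRingEnd 𝕜 t * c := by
        rw [hc]; ring
      have h2 : starRingEnd 𝕜 t * c = -((s : 𝕜) * ((‖c‖ ^ 2 : ℝ) : 𝕜)) := by
        rw [ht]
        simp only [map_neg, map_mul, RCLike.conj_ofReal]
        rw [RCLike.ofReal_pow, ← RCLike.conj_mul]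
        ring
      have := congrArg RCLike.re h1
      simp only [map_sub, RCLike.re_ofReal_mul] at this
      rw [this, h2, map_neg, ← RCLike.ofReal_mul, RCLike.ofReal_re]
    have hnt : ‖t‖ ^ 2 = s ^ 2 * ‖c‖ ^ 2 := by
      rw [ht, norm_neg, norm_mul, mul_pow, RCLike.norm_ofReal, sq_abs]
    rw [hnt, ← hm] at hmain
    -- hmain : m^2 * (1 + 2*re(conj t * ipA y x) + s²‖c‖² re(ipA y y)) ≤ m² + 2*re(conj t * ipA Ty Tx) + s²‖c‖² re(ipA Ty Ty)
    have hkey : 0 ≤ -(2 * (s * ‖c‖ ^ 2)) + s ^ 2 * ‖c‖ ^ 2 * D := by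
      rw [hD]; nlinarith [hmain, hcross]
    have hsD : s * D < 1 := by
      rw [hs]
      rw [inv_mul_eq_div, div_lt_one (by linarith)]
      linarith
    have hcpos : 0 < ‖c‖ ^ 2 := pow_pos (norm_pos_iff.mpr hne) 2
    nlinarith [mul_pos hs0 hcpos, hsD, hkey]
  · intro h
    have hxx' := h x
    have := congrArg RCLike.re hxx'
    rw [RCLike.re_ofReal_mul, hxx, mul_one] at this
    rw [seminormA, show (inner 𝕜 (A (T x)) (T x) : 𝕜) = ipA A (T x) (T x) from rfl, this,
      Real.sqrt_sq hm0]
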